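/- The orbit of the vector (1,0,0,0,0,0,0) under the group of linear automorphisms of ℝ^7 generated by the odd and even Coxeter maps ∙c and ∘c of Ẽ6 is exactly the set K1 + ℤδ, where δ = (1,2,1,2,1,2,3) and K1 consists of the 12 vectors (0,−2,−1,−2,−1,−2,−3), (0,−1,−1,−2,−1,−2,−3), (0,−1,−1,−1,−1,−1,−1), (0,−1,0,0,0,0,−1), (0,0,−1,−1,−1,−1,−1), (0,0,0,−1,0,−1,−1), (0,0,0,1,0,1,1), (0,0,1,1,1,1,1), (0,1,0,0,0,0,1), (0,1,1,1,1,1,1), (0,1,1,2,1,2,3), (0,2,1,2,1,2,3). In particular this Coxeter orbit is the union of exactly 12 δ-series of roots. -/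

import Mathlib

@[simp] lemma cons_val_five' {α : Type*} (a b c d e f g : α) : ![a,b,c,d,e,f,g] 5 = f := rfl
@[simp] lemma cons_val_six' {α : Type*} (a b c d e f g : α) : ![a,b,c,d,e,f,g] 6 = g := rfl
@[simp] lemma cons_val_two' {α : Type*} (a b c d e f g : α) : ![a,b,c,d,e,f,g] 2 = c := rfl
@[simp] lemma cons_val_three' {α : Type*} (a b c d e f g : α) : ![a,b,c,d,e,f,g] 3 = d := rfl
@[simp] lemma cons_val_four' {α : Type*} (a b c d e f g : α) : ![a,b,c,d,e,f,g] 4 = e := rfl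

/-- The odd Coxeter map `∙c` of `Ẽ6`:
`∙c(x) = (x2−x1, x2, x4−x3, x4, x6−x5, x6, x2+x4+x6−x0)` in the coordinates
`x = (x1,…,x6,x0)` (here `x i`, `i = 0,…,5`, are `x1,…,x6` and `x 6` is `x0`). -/
def cOddFun (x : Fin 7 → ℝ) : Fin 7 → ℝ :=
  ![x 1 - x 0, x 1, x 3 - x 2, x 3, x 5 - x 4, x 5, x 1 + x 3 + x 5 - x 6]

/-- The even Coxeter map `∘c` of `Ẽ6`:
`∘c(x) = (x1, x1+x0−x2, x3, x3+x0−x4, x5, x5+x0−x6, x0)`. -/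
def cEvenFun (x : Fin 7 → ℝ) : Fin 7 → ℝ :=
  ![x 0, x 0 + x 6 - x 1, x 2, x 2 + x 6 - x 3, x 4, x 4 + x 6 - x 5, x 6]

lemma cOddFun_involutive : Function.Involutive cOddFun := by
  intro x; funext i; fin_cases i <;> simp [cOddFun]

lemma cEvenFun_involutive : Function.Involutive cEvenFun := by
  intro x; funext i; fin_cases i <;> simp [cEvenFun]

/-- The odd Coxeter map as a (linear) automorphism of `ℝ^7`. -/
def cOdd : Equiv.Perm (Fin 7 → ℝ) := cOddFun_involutive.toPerm

/-- The even Coxeter map as a (linear) automorphism of `ℝ^7`. -/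
def cEven : Equiv.Perm (Fin 7 → ℝ) := cEvenFun_involutive.toPerm

/-- The minimal imaginary root `δ = (1,2,1,2,1,2,3)` of `Ẽ6`. -/
def deltaE6 : Fin 7 → ℝ := ![1, 2, 1, 2, 1, 2, 3]

/-- The 12 vectors of the Coxeter series `K1`. -/
def K1 : Set (Fin 7 → ℝ) :=
  { ![0, -2, -1, -2, -1, -2, -3], ![0, -1, -1, -2, -1, -2, -3],
    ![0, -1, -1, -1, -1, -1, -1], ![0, -1, 0, 0, 0, 0, -1],
    ![0, 0, -1, -1, -1, -1, -1], ![0, 0, 0, -1, 0, -1, -1],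
    ![0, 0, 0, 1, 0, 1, 1], ![0, 0, 1, 1, 1, 1, 1],
    ![0, 1, 0, 0, 0, 0, 1], ![0, 1, 1, 1, 1, 1, 1],
    ![0, 1, 1, 2, 1, 2, 3], ![0, 2, 1, 2, 1, 2, 3] }

def w0 : Fin 7 → ℝ := ![0, -2, -1, -2, -1, -2, -3]
def w1 : Fin 7 → ℝ := ![0, -1, -1, -2, -1, -2, -3]
def w2 : Fin 7 → ℝ := ![0, -1, -1, -1, -1, -1, -1]
def w3 : Fin 7 → ℝ := ![0, -1, 0, 0, 0, 0, -1]
def w4 : Fin 7 → ℝ := ![0, 0, -1, -1, -1, -1, -1]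
def w5 : Fin 7 → ℝ := ![0, 0, 0, -1, 0, -1, -1]
def w6 : Fin 7 → ℝ := ![0, 0, 0, 1, 0, 1, 1]
def w7 : Fin 7 → ℝ := ![0, 0, 1, 1, 1, 1, 1]
def w8 : Fin 7 → ℝ := ![0, 1, 0, 0, 0, 0, 1]
def w9 : Fin 7 → ℝ := ![0, 1, 1, 1, 1, 1, 1]
def w10 : Fin 7 → ℝ := ![0, 1, 1, 2, 1, 2, 3]
def w11 : Fin 7 → ℝ := ![0, 2, 1, 2, 1, 2, 3]

lemma w0_mem : w0 ∈ K1 := by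
  simp only [K1, Set.mem_insert_iff, Set.mem_singleton_iff]; tauto
lemma w1_mem : w1 ∈ K1 := by
  simp only [K1, Set.mem_insert_iff, Set.mem_singleton_iff]; tauto
lemma w2_mem : w2 ∈ K1 := by
  simp only [K1, Set.mem_insert_iff, Set.mem_singleton_iff]; tauto
lemma w3_mem : w3 ∈ K1 := by
  simp only [K1, Set.mem_insert_iff, Set.mem_singleton_iff]; tauto
lemma w4_mem : w4 ∈ K1 := by
  simp only [K1, Set.mem_insert_iff, Set.mem_singleton_iff]; tauto
lemma w5_mem : w5 ∈ K1 := by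
  simp only [K1, Set.mem_insert_iff, Set.mem_singleton_iff]; tauto
lemma w6_mem : w6 ∈ K1 := by
  simp only [K1, Set.mem_insert_iff, Set.mem_singleton_iff]; tauto
lemma w7_mem : w7 ∈ K1 := by
  simp only [K1, Set.mem_insert_iff, Set.mem_singleton_iff]; tauto
lemma w8_mem : w8 ∈ K1 := by
  simp only [K1, Set.mem_insert_iff, Set.mem_singleton_iff]; tauto
lemma w9_mem : w9 ∈ K1 := by
  simp only [K1, Set.mem_insert_iff, Set.mem_singleton_iff]; tauto
lemma w10_mem : w10 ∈ K1 := by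
  simp only [K1, Set.mem_insert_iff, Set.mem_singleton_iff]; tauto
lemma w11_mem : w11 ∈ K1 := by
  simp only [K1, Set.mem_insert_iff, Set.mem_singleton_iff]; tauto

lemma ra0 : cOddFun w0 = w11 + (-2 : ℤ) • deltaE6 := by
  funext i; fin_cases i <;> norm_num [cOddFun, w0, w11, deltaE6]
lemma ra1 : cOddFun w1 = w8 + (-1 : ℤ) • deltaE6 := by
  funext i; fin_cases i <;> norm_num [cOddFun, w1, w8, deltaE6]
lemma ra2 : cOddFun w2 = w9 + (-1 : ℤ) • deltaE6 := by
  funext i; fin_cases i <;> norm_num [cOddFun, w2, w9, deltaE6]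
lemma ra3 : cOddFun w3 = w10 + (-1 : ℤ) • deltaE6 := by
  funext i; fin_cases i <;> norm_num [cOddFun, w3, w10, deltaE6]
lemma ra4 : cOddFun w4 = w5 + (0 : ℤ) • deltaE6 := by
  funext i; fin_cases i <;> norm_num [cOddFun, w4, w5, deltaE6]
lemma ra5 : cOddFun w5 = w4 + (0 : ℤ) • deltaE6 := by
  funext i; fin_cases i <;> norm_num [cOddFun, w5, w4, deltaE6]
lemma ra6 : cOddFun w6 = w7 + (0 : ℤ) • deltaE6 := by
  funext i; fin_cases i <;> norm_num [cOddFun, w6, w7, deltaE6]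
lemma ra7 : cOddFun w7 = w6 + (0 : ℤ) • deltaE6 := by
  funext i; fin_cases i <;> norm_num [cOddFun, w7, w6, deltaE6]
lemma ra8 : cOddFun w8 = w1 + (1 : ℤ) • deltaE6 := by
  funext i; fin_cases i <;> norm_num [cOddFun, w8, w1, deltaE6]
lemma ra9 : cOddFun w9 = w2 + (1 : ℤ) • deltaE6 := by
  funext i; fin_cases i <;> norm_num [cOddFun, w9, w2, deltaE6]
lemma ra10 : cOddFun w10 = w3 + (1 : ℤ) • deltaE6 := by
  funext i; fin_cases i <;> norm_num [cOddFun, w10, w3, deltaE6]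
lemma ra11 : cOddFun w11 = w0 + (2 : ℤ) • deltaE6 := by
  funext i; fin_cases i <;> norm_num [cOddFun, w11, w0, deltaE6]
lemma rb0 : cEvenFun w0 = w1 + (0 : ℤ) • deltaE6 := by
  funext i; fin_cases i <;> norm_num [cEvenFun, w0, w1, deltaE6]
lemma rb1 : cEvenFun w1 = w0 + (0 : ℤ) • deltaE6 := by
  funext i; fin_cases i <;> norm_num [cEvenFun, w1, w0, deltaE6]
lemma rb2 : cEvenFun w2 = w4 + (0 : ℤ) • deltaE6 := by
  funext i; fin_cases i <;> norm_num [cEvenFun, w2, w4, deltaE6]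
lemma rb3 : cEvenFun w3 = w5 + (0 : ℤ) • deltaE6 := by
  funext i; fin_cases i <;> norm_num [cEvenFun, w3, w5, deltaE6]
lemma rb4 : cEvenFun w4 = w2 + (0 : ℤ) • deltaE6 := by
  funext i; fin_cases i <;> norm_num [cEvenFun, w4, w2, deltaE6]
lemma rb5 : cEvenFun w5 = w3 + (0 : ℤ) • deltaE6 := by
  funext i; fin_cases i <;> norm_num [cEvenFun, w5, w3, deltaE6]
lemma rb6 : cEvenFun w6 = w8 + (0 : ℤ) • deltaE6 := by
  funext i; fin_cases i <;> norm_num [cEvenFun, w6, w8, deltaE6]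
lemma rb7 : cEvenFun w7 = w9 + (0 : ℤ) • deltaE6 := by
  funext i; fin_cases i <;> norm_num [cEvenFun, w7, w9, deltaE6]
lemma rb8 : cEvenFun w8 = w6 + (0 : ℤ) • deltaE6 := by
  funext i; fin_cases i <;> norm_num [cEvenFun, w8, w6, deltaE6]
lemma rb9 : cEvenFun w9 = w7 + (0 : ℤ) • deltaE6 := by
  funext i; fin_cases i <;> norm_num [cEvenFun, w9, w7, deltaE6]
lemma rb10 : cEvenFun w10 = w11 + (0 : ℤ) • deltaE6 := by
  funext i; fin_cases i <;> norm_num [cEvenFun, w10, w11, deltaE6]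
lemma rb11 : cEvenFun w11 = w10 + (0 : ℤ) • deltaE6 := by
  funext i; fin_cases i <;> norm_num [cEvenFun, w11, w10, deltaE6]

lemma linA (x : Fin 7 → ℝ) (k : ℤ) : cOddFun (x + k • deltaE6) = cOddFun x + k • deltaE6 := by
  funext i; fin_cases i <;> simp [cOddFun, deltaE6] <;> ring

lemma linB (x : Fin 7 → ℝ) (k : ℤ) : cEvenFun (x + k • deltaE6) = cEvenFun x + k • deltaE6 := by
  funext i; fin_cases i <;> simp [cEvenFun, deltaE6] <;> ring

abbrev OG : Set (Fin 7 → ℝ) :=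
  MulAction.orbit (Subgroup.closure {cOdd, cEven} : Subgroup (Equiv.Perm (Fin 7 → ℝ)))
    (![1, 0, 0, 0, 0, 0, 0] : Fin 7 → ℝ)

abbrev SK : Set (Fin 7 → ℝ) := {y | ∃ v ∈ K1, ∃ k : ℤ, y = v + k • deltaE6}

lemma cOdd_mem : cOdd ∈ Subgroup.closure ({cOdd, cEven} : Set (Equiv.Perm (Fin 7 → ℝ))) :=
  Subgroup.subset_closure (Set.mem_insert _ _)

lemma cEven_mem : cEven ∈ Subgroup.closure ({cOdd, cEven} : Set (Equiv.Perm (Fin 7 → ℝ))) :=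
  Subgroup.subset_closure (Set.mem_insert_of_mem _ rfl)

lemma closedA {y : Fin 7 → ℝ} (hy : y ∈ OG) : cOddFun y ∈ OG := by
  obtain ⟨g, rfl⟩ := hy
  exact ⟨⟨cOdd, cOdd_mem⟩ * g, rfl⟩

lemma closedB {y : Fin 7 → ℝ} (hy : y ∈ OG) : cEvenFun y ∈ OG := by
  obtain ⟨g, rfl⟩ := hy
  exact ⟨⟨cEven, cEven_mem⟩ * g, rfl⟩

lemma memA {vi vj : Fin 7 → ℝ} {c : ℤ} (h : cOddFun vi = vj + c • deltaE6) {k : ℤ}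
    (hm : vi + k • deltaE6 ∈ OG) : vj + (k + c) • deltaE6 ∈ OG := by
  have h2 : cOddFun (vi + k • deltaE6) = vj + (k + c) • deltaE6 := by
    rw [linA, h, add_assoc, ← add_zsmul, add_comm c k]
  rw [← h2]; exact closedA hm

lemma memB {vi vj : Fin 7 → ℝ} {c : ℤ} (h : cEvenFun vi = vj + c • deltaE6) {k : ℤ}
    (hm : vi + k • deltaE6 ∈ OG) : vj + (k + c) • deltaE6 ∈ OG := by
  have h2 : cEvenFun (vi + k • deltaE6) = vj + (k + c) • deltaE6 := by
    rw [linB, h, add_assoc, ← add_zsmul, add_comm c k]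
  rw [← h2]; exact closedB hm

lemma memSA {vi vj : Fin 7 → ℝ} {c : ℤ} (hj : vj ∈ K1) (h : cOddFun vi = vj + c • deltaE6)
    (k : ℤ) : cOddFun (vi + k • deltaE6) ∈ SK :=
  ⟨vj, hj, k + c, by rw [linA, h, add_assoc, ← add_zsmul, add_comm c k]⟩

lemma memSB {vi vj : Fin 7 → ℝ} {c : ℤ} (hj : vj ∈ K1) (h : cEvenFun vi = vj + c • deltaE6)
    (k : ℤ) : cEvenFun (vi + k • deltaE6) ∈ SK :=
  ⟨vj, hj, k + c, by rw [linB, h, add_assoc, ← add_zsmul, add_comm c k]⟩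

lemma mem_w0 : ∀ k : ℤ, w0 + k • deltaE6 ∈ OG := by
  have hup : ∀ k : ℤ, w0 + k • deltaE6 ∈ OG → w0 + (k + 1) • deltaE6 ∈ OG := by
    intro k h0
    have h1 := memB rb0 h0
    have h2 := memA ra1 h1
    have h3 := memB rb8 h2
    have h4 := memA ra6 h3
    have h5 := memB rb7 h4
    have h6 := memA ra9 h5
    have h7 := memB rb2 h6
    have h8 := memA ra4 h7
    have h9 := memB rb5 h8
    have h10 := memA ra3 h9
    have h11 := memB rb10 h10
    have h12 := memA ra11 h11
    have he : ∀ m : ℤ, w0 + m • deltaE6 ∈ OG → m = k + 1 → w0 + (k+1) • deltaE6 ∈ OG := by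
      rintro m hm rfl; exact hm
    exact he _ h12 (by ring)
  have hdown : ∀ k : ℤ, w0 + k • deltaE6 ∈ OG → w0 + (k - 1) • deltaE6 ∈ OG := by
    intro k h0
    have h1 := memA ra0 h0
    have h2 := memB rb11 h1
    have h3 := memA ra10 h2
    have h4 := memB rb3 h3
    have h5 := memA ra5 h4
    have h6 := memB rb4 h5
    have h7 := memA ra2 h6
    have h8 := memB rb9 h7
    have h9 := memA ra7 h8
    have h10 := memB rb6 h9
    have h11 := memA ra8 h10
    have h12 := memB rb1 h11
    have he : ∀ m : ℤ, w0 + m • deltaE6 ∈ OG → m = k - 1 → w0 + (k-1) • deltaE6 ∈ OG := by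
      rintro m hm rfl; exact hm
    exact he _ h12 (by ring)
  have h1 : w0 + (1 : ℤ) • deltaE6 ∈ OG := by
    have hx : (![1, 0, 0, 0, 0, 0, 0] : Fin 7 → ℝ) = w0 + (1 : ℤ) • deltaE6 := by
      funext i; fin_cases i <;> norm_num [w0, deltaE6]
    rw [← hx]; exact MulAction.mem_orbit_self _
  intro k
  induction k using Int.induction_on with
  | zero =>
    have := hdown 1 h1
    rw [show (1 : ℤ) - 1 = 0 by ring] at this; exact this
  | succ n ih => exact hup n ih
  | pred n ih =>
    have := hdown (-(n : ℤ)) ih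
    rw [show (-(n : ℤ)) - 1 = -(n : ℤ) - 1 by ring] at this; exact this

lemma mem_w1 : ∀ k : ℤ, w1 + k • deltaE6 ∈ OG := by
  intro k
  have h0 := mem_w0 (k - (0))
  have h1 := memB rb0 h0
  have he : ∀ m : ℤ, w1 + m • deltaE6 ∈ OG → m = k → w1 + k • deltaE6 ∈ OG := by
    rintro m hm rfl; exact hm
  exact he _ h1 (by ring)

lemma mem_w2 : ∀ k : ℤ, w2 + k • deltaE6 ∈ OG := by
  intro k
  have h0 := mem_w0 (k - (0))
  have h1 := memB rb0 h0
  have h2 := memA ra1 h1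
  have h3 := memB rb8 h2
  have h4 := memA ra6 h3
  have h5 := memB rb7 h4
  have h6 := memA ra9 h5
  have he : ∀ m : ℤ, w2 + m • deltaE6 ∈ OG → m = k → w2 + k • deltaE6 ∈ OG := by
    rintro m hm rfl; exact hm
  exact he _ h6 (by ring)

lemma mem_w3 : ∀ k : ℤ, w3 + k • deltaE6 ∈ OG := by
  intro k
  have h0 := mem_w0 (k - (0))
  have h1 := memB rb0 h0
  have h2 := memA ra1 h1
  have h3 := memB rb8 h2
  have h4 := memA ra6 h3
  have h5 := memB rb7 h4
  have h6 := memA ra9 h5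
  have h7 := memB rb2 h6
  have h8 := memA ra4 h7
  have h9 := memB rb5 h8
  have he : ∀ m : ℤ, w3 + m • deltaE6 ∈ OG → m = k → w3 + k • deltaE6 ∈ OG := by
    rintro m hm rfl; exact hm
  exact he _ h9 (by ring)

lemma mem_w4 : ∀ k : ℤ, w4 + k • deltaE6 ∈ OG := by
  intro k
  have h0 := mem_w0 (k - (0))
  have h1 := memB rb0 h0
  have h2 := memA ra1 h1
  have h3 := memB rb8 h2
  have h4 := memA ra6 h3
  have h5 := memB rb7 h4
  have h6 := memA ra9 h5
  have h7 := memB rb2 h6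
  have he : ∀ m : ℤ, w4 + m • deltaE6 ∈ OG → m = k → w4 + k • deltaE6 ∈ OG := by
    rintro m hm rfl; exact hm
  exact he _ h7 (by ring)

lemma mem_w5 : ∀ k : ℤ, w5 + k • deltaE6 ∈ OG := by
  intro k
  have h0 := mem_w0 (k - (0))
  have h1 := memB rb0 h0
  have h2 := memA ra1 h1
  have h3 := memB rb8 h2
  have h4 := memA ra6 h3
  have h5 := memB rb7 h4
  have h6 := memA ra9 h5
  have h7 := memB rb2 h6
  have h8 := memA ra4 h7
  have he : ∀ m : ℤ, w5 + m • deltaE6 ∈ OG → m = k → w5 + k • deltaE6 ∈ OG := by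
    rintro m hm rfl; exact hm
  exact he _ h8 (by ring)

lemma mem_w6 : ∀ k : ℤ, w6 + k • deltaE6 ∈ OG := by
  intro k
  have h0 := mem_w0 (k - (-1))
  have h1 := memB rb0 h0
  have h2 := memA ra1 h1
  have h3 := memB rb8 h2
  have he : ∀ m : ℤ, w6 + m • deltaE6 ∈ OG → m = k → w6 + k • deltaE6 ∈ OG := by
    rintro m hm rfl; exact hm
  exact he _ h3 (by ring)

lemma mem_w7 : ∀ k : ℤ, w7 + k • deltaE6 ∈ OG := by
  intro k
  have h0 := mem_w0 (k - (-1))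
  have h1 := memB rb0 h0
  have h2 := memA ra1 h1
  have h3 := memB rb8 h2
  have h4 := memA ra6 h3
  have he : ∀ m : ℤ, w7 + m • deltaE6 ∈ OG → m = k → w7 + k • deltaE6 ∈ OG := by
    rintro m hm rfl; exact hm
  exact he _ h4 (by ring)

lemma mem_w8 : ∀ k : ℤ, w8 + k • deltaE6 ∈ OG := by
  intro k
  have h0 := mem_w0 (k - (-1))
  have h1 := memB rb0 h0
  have h2 := memA ra1 h1
  have he : ∀ m : ℤ, w8 + m • deltaE6 ∈ OG → m = k → w8 + k • deltaE6 ∈ OG := by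
    rintro m hm rfl; exact hm
  exact he _ h2 (by ring)

lemma mem_w9 : ∀ k : ℤ, w9 + k • deltaE6 ∈ OG := by
  intro k
  have h0 := mem_w0 (k - (-1))
  have h1 := memB rb0 h0
  have h2 := memA ra1 h1
  have h3 := memB rb8 h2
  have h4 := memA ra6 h3
  have h5 := memB rb7 h4
  have he : ∀ m : ℤ, w9 + m • deltaE6 ∈ OG → m = k → w9 + k • deltaE6 ∈ OG := by
    rintro m hm rfl; exact hm
  exact he _ h5 (by ring)

lemma mem_w10 : ∀ k : ℤ, w10 + k • deltaE6 ∈ OG := by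
  intro k
  have h0 := mem_w0 (k - (-1))
  have h1 := memB rb0 h0
  have h2 := memA ra1 h1
  have h3 := memB rb8 h2
  have h4 := memA ra6 h3
  have h5 := memB rb7 h4
  have h6 := memA ra9 h5
  have h7 := memB rb2 h6
  have h8 := memA ra4 h7
  have h9 := memB rb5 h8
  have h10 := memA ra3 h9
  have he : ∀ m : ℤ, w10 + m • deltaE6 ∈ OG → m = k → w10 + k • deltaE6 ∈ OG := by
    rintro m hm rfl; exact hm
  exact he _ h10 (by ring)

lemma mem_w11 : ∀ k : ℤ, w11 + k • deltaE6 ∈ OG := by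
  intro k
  have h0 := mem_w0 (k - (-1))
  have h1 := memB rb0 h0
  have h2 := memA ra1 h1
  have h3 := memB rb8 h2
  have h4 := memA ra6 h3
  have h5 := memB rb7 h4
  have h6 := memA ra9 h5
  have h7 := memB rb2 h6
  have h8 := memA ra4 h7
  have h9 := memB rb5 h8
  have h10 := memA ra3 h9
  have h11 := memB rb10 h10
  have he : ∀ m : ℤ, w11 + m • deltaE6 ∈ OG → m = k → w11 + k • deltaE6 ∈ OG := by
    rintro m hm rfl; exact hm
  exact he _ h11 (by ring)

lemma K1_zero : ∀ v ∈ K1, v 0 = 0 := by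
  intro v hv
  simp only [K1, Set.mem_insert_iff, Set.mem_singleton_iff] at hv
  rcases hv with rfl|rfl|rfl|rfl|rfl|rfl|rfl|rfl|rfl|rfl|rfl|rfl <;> norm_num

lemma invSA : ∀ z ∈ SK, cOddFun z ∈ SK := by
  rintro z ⟨v, hv, k, rfl⟩
  simp only [K1, Set.mem_insert_iff, Set.mem_singleton_iff] at hv
  rcases hv with rfl|rfl|rfl|rfl|rfl|rfl|rfl|rfl|rfl|rfl|rfl|rfl

  · exact memSA w11_mem ra0 k
  · exact memSA w8_mem ra1 k
  · exact memSA w9_mem ra2 k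
  · exact memSA w10_mem ra3 k
  · exact memSA w5_mem ra4 k
  · exact memSA w4_mem ra5 k
  · exact memSA w7_mem ra6 k
  · exact memSA w6_mem ra7 k
  · exact memSA w1_mem ra8 k
  · exact memSA w2_mem ra9 k
  · exact memSA w3_mem ra10 k
  · exact memSA w0_mem ra11 k

lemma invSB : ∀ z ∈ SK, cEvenFun z ∈ SK := by
  rintro z ⟨v, hv, k, rfl⟩
  simp only [K1, Set.mem_insert_iff, Set.mem_singleton_iff] at hv
  rcases hv with rfl|rfl|rfl|rfl|rfl|rfl|rfl|rfl|rfl|rfl|rfl|rfl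

  · exact memSB w1_mem rb0 k
  · exact memSB w0_mem rb1 k
  · exact memSB w4_mem rb2 k
  · exact memSB w5_mem rb3 k
  · exact memSB w2_mem rb4 k
  · exact memSB w3_mem rb5 k
  · exact memSB w8_mem rb6 k
  · exact memSB w9_mem rb7 k
  · exact memSB w6_mem rb8 k
  · exact memSB w7_mem rb9 k
  · exact memSB w11_mem rb10 k
  · exact memSB w10_mem rb11 k

/-- The orbit of `(1,0,0,0,0,0,0)` under the group generated by the odd and
even Coxeter maps of `Ẽ6` is exactly `K1 + ℤδ`; moreover the map
`(v,k) ↦ v + kδ` is injective on `K1 × ℤ`, so this orbit is the union of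
exactly 12 `δ`-series of roots. -/
theorem coxeter_orbit_K1 :
    MulAction.orbit (Subgroup.closure {cOdd, cEven} : Subgroup (Equiv.Perm (Fin 7 → ℝ)))
        (![1, 0, 0, 0, 0, 0, 0] : Fin 7 → ℝ)
      = {y | ∃ v ∈ K1, ∃ k : ℤ, y = v + k • deltaE6} ∧
    Set.InjOn (fun p : (Fin 7 → ℝ) × ℤ => p.1 + p.2 • deltaE6) (K1 ×ˢ Set.univ) := by
  constructor
  · apply Set.eq_of_subset_of_subset
    · rintro y ⟨⟨g, hg⟩, rfl⟩
      have H : ∀ g ∈ Subgroup.closure ({cOdd, cEven} : Set (Equiv.Perm (Fin 7 → ℝ))),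
          ∀ z ∈ SK, g z ∈ SK ∧ g⁻¹ z ∈ SK := by
        intro g hg
        induction hg using Subgroup.closure_induction with
        | mem x hx =>
          rcases hx with rfl | hx
          · exact fun z hz => ⟨invSA z hz, invSA z hz⟩
          · rw [Set.mem_singleton_iff] at hx; subst hx
            exact fun z hz => ⟨invSB z hz, invSB z hz⟩
        | one => exact fun z hz => ⟨hz, hz⟩
        | mul x y hx hy ihx ihy =>
          intro z hz
          constructor
          · exact ihx _ (ihy z hz).1 |>.1
          · show (x * y)⁻¹ z ∈ SK
            rw [mul_inv_rev]
            exact ihy _ (ihx z hz).2 |>.2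
        | inv x hx ih =>
          intro z hz
          refine ⟨(ih z hz).2, ?_⟩
          rw [inv_inv]
          exact (ih z hz).1
      have hx0 : (![1, 0, 0, 0, 0, 0, 0] : Fin 7 → ℝ) ∈ SK := by
        refine ⟨w0, w0_mem, 1, ?_⟩
        funext i; fin_cases i <;> norm_num [w0, deltaE6]
      exact (H g hg _ hx0).1
    · rintro y ⟨v, hv, k, rfl⟩
      simp only [K1, Set.mem_insert_iff, Set.mem_singleton_iff] at hv
      rcases hv with rfl|rfl|rfl|rfl|rfl|rfl|rfl|rfl|rfl|rfl|rfl|rfl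

      · exact mem_w0 k
      · exact mem_w1 k
      · exact mem_w2 k
      · exact mem_w3 k
      · exact mem_w4 k
      · exact mem_w5 k
      · exact mem_w6 k
      · exact mem_w7 k
      · exact mem_w8 k
      · exact mem_w9 k
      · exact mem_w10 k
      · exact mem_w11 k
  · rintro ⟨v, k⟩ ⟨hv, -⟩ ⟨v', k'⟩ ⟨hv', -⟩ h
    simp only at h
    have h0 := congrFun h 0
    have hk : k = k' := by
      have h0' : (k : ℝ) = k' := by
        simpa [K1_zero v hv, K1_zero v' hv', deltaE6] using h0
      exact_mod_cast h0'
    subst hk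
    have hvv : v = v' := by
      have := add_right_cancel h
      exact this
    rw [hvv]
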